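/- A triangle-free graph G is edge-partitionable (its edges can be colored red and blue so that the blue edges form a star forest and every vertex is incident to at most two red edges) if and only if the line graph L(G) is partitionable (its vertices split into a P3-free part and a K3-free part). -/

import Mathlib

open SimpleGraph

variable {V : Type*}

/-- The set `B` induces a `P₃`-free graph (disjoint union of cliques). -/
def P3FreeOn {W : Type*} (G : SimpleGraph W) (B : Set W) : Prop :=
  ∀ a ∈ B, ∀ b ∈ B, ∀ c ∈ B, G.Adj a b → G.Adj b c → a ≠ c → G.Adj a c

/-- The set `R` induces a triangle-free graph. -/
def K3FreeOn {W : Type*} (G : SimpleGraph W) (R : Set W) : Prop :=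
  ∀ a ∈ R, ∀ b ∈ R, ∀ c ∈ R, ¬(G.Adj a b ∧ G.Adj b c ∧ G.Adj a c)

/-- A graph is partitionable if its vertices split into a `P₃`-free part and a
triangle-free part. -/
def Partitionable {W : Type*} (G : SimpleGraph W) : Prop :=
  ∃ B : Set W, P3FreeOn G B ∧ K3FreeOn G Bᶜ

/-- A graph is a star forest iff it has no path on four vertices as a subgraph and
no triangle: every connected component is a star. -/
def IsStarForest (H : SimpleGraph V) : Prop :=
  (∀ a b c d : V, H.Adj a b → H.Adj b c → H.Adj c d → a = c ∨ b = d ∨ a = d) ∧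
    H.CliqueFree 3

/-- A graph is edge-partitionable if its edges can be coloured red and blue so that
the blue edges form a star forest and every vertex is incident to at most two
red edges. -/
def EdgePartitionable (G : SimpleGraph V) : Prop :=
  ∃ Bl : SimpleGraph V, Bl ≤ G ∧ IsStarForest Bl ∧
    ∀ v, {u | G.Adj v u ∧ ¬Bl.Adj v u}.ncard ≤ 2

/-!
Colour the edges of `G` by a subgraph `H ≤ G` (blue) and its complement (red); under this
dictionary, subsets of `V(L(G))` are exactly such colourings. Three blue edges forming an induced
`P₃` in `L(G)` are the edges of a path on four vertices in `H`, so the blue part is `P₃`-free iff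
`H` has no such path. Three pairwise intersecting edges either share a vertex or form a triangle;
as `G` is triangle-free, a red triangle of `L(G)` is the same as three red edges at one vertex.
Finally `H` is triangle-free because `G` is.
-/

lemma Set.ncard_le_two_iff {α : Type*} {S : Set α} (hS : S.Finite) :
    S.ncard ≤ 2 ↔ ∀ a ∈ S, ∀ b ∈ S, ∀ c ∈ S, a = b ∨ a = c ∨ b = c := by
  rw [← not_lt, Set.two_lt_ncard hS]
  grind

namespace SimpleGraph

variable {G H : SimpleGraph V}

@[simp]
lemma lineGraph_adj_mk {a b c d : V} (hab : s(a, b) ∈ G.edgeSet) (hcd : s(c, d) ∈ G.edgeSet) :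
    G.lineGraph.Adj ⟨s(a, b), hab⟩ ⟨s(c, d), hcd⟩ ↔
      s(a, b) ≠ s(c, d) ∧ (a = c ∨ a = d ∨ b = c ∨ b = d) := by
  simp only [lineGraph_adj_iff_exists, ne_eq, Subtype.ext_iff, Sym2.mem_iff, or_and_right,
    exists_or, exists_eq_left, or_assoc]

lemma exists_le_preimage_edgeSet_eq (B : Set G.edgeSet) :
    ∃ H ≤ G, Subtype.val ⁻¹' H.edgeSet = B := by
  refine ⟨G.deleteEdges (Subtype.val '' Bᶜ), deleteEdges_le _, ?_⟩
  ext e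
  simp [edgeSet_deleteEdges]

lemma p3FreeOn_lineGraph_iff (hH : H ≤ G) :
    P3FreeOn G.lineGraph (Subtype.val ⁻¹' H.edgeSet) ↔
      ∀ a b c d, H.Adj a b → H.Adj b c → H.Adj c d → a = c ∨ b = d ∨ a = d := by
  simp only [P3FreeOn, Subtype.forall, Sym2.forall, Set.mem_preimage, lineGraph_adj_mk, ne_eq,
    Subtype.mk.injEq, mem_edgeSet, Sym2.eq_iff]
  constructor
  · intro hB a b c d hab hbc hcd
    by_contra! hne
    have := hB a b (hH hab) hab b c (hH hbc) hbc c d (hH hcd) hcd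
    grind [hbc.ne]
  · intro hpath a b _ hab c d _ hcd e f _ hef
    -- if the outer edges `ab` and `ef` were disjoint, `ab, cd, ef` would form a path in `H`
    grind [H.adj_symm, hab.ne, hcd.ne, hef.ne]

lemma k3FreeOn_lineGraph_iff [Finite V] (htf : G.CliqueFree 3) :
    K3FreeOn G.lineGraph (Subtype.val ⁻¹' H.edgeSet)ᶜ ↔
      ∀ v, {u | G.Adj v u ∧ ¬H.Adj v u}.ncard ≤ 2 := by
  classical
  have hno_triangle : ∀ x y z, G.Adj x y → G.Adj x z → G.Adj y z → False :=
    fun x y z hxy hxz hyz => htf {x, y, z} (is3Clique_triple_iff.2 ⟨hxy, hxz, hyz⟩)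
  simp only [K3FreeOn, Subtype.forall, Sym2.forall, Set.mem_compl_iff, Set.mem_preimage,
    lineGraph_adj_mk, mem_edgeSet, ne_eq, Sym2.eq_iff, Set.ncard_le_two_iff (Set.toFinite _),
    Set.mem_ofPred_eq, and_imp]
  constructor
  · intro hR v a hva hva' b hvb hvb' c hvc hvc'
    by_contra! hne
    exact hR v a hva hva' v b hvb hvb' v c hvc hvc' (by grind [hva.ne, hvb.ne, hvc.ne])
  · intro hdeg a b hab _ c d hcd _ e f hef _
    grind [G.adj_symm, H.adj_symm, hab.ne, hcd.ne, hef.ne]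

end SimpleGraph

theorem stmt13 [Fintype V] (G : SimpleGraph V) (htf : G.CliqueFree 3) :
    EdgePartitionable G ↔ Partitionable G.lineGraph := by
  constructor
  · rintro ⟨H, hHG, ⟨hpath, -⟩, hdeg⟩
    exact ⟨Subtype.val ⁻¹' H.edgeSet, (p3FreeOn_lineGraph_iff hHG).2 hpath,
      (k3FreeOn_lineGraph_iff htf).2 hdeg⟩
  · rintro ⟨B, hB, hR⟩
    obtain ⟨H, hHG, rfl⟩ := exists_le_preimage_edgeSet_eq B
    exact ⟨H, hHG, ⟨(p3FreeOn_lineGraph_iff hHG).1 hB, htf.anti hHG⟩,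
      (k3FreeOn_lineGraph_iff htf).1 hR⟩
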